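/- arXiv:2508.19858 — 3 statements merged into one kernel-verified Lean document; each statement's English description precedes it below -/
import Mathlib

section
/- Let C be a binary linear code of length n whose nonzero codewords all have Hamming weight at least d_min, and let w_max ≥ d_min be an integer. Let v be a vector of length n with Hamming weight ‖v‖ = ⌊(w_max+1)/2⌋ such that for every codeword c with ‖c‖ ∈ [d_min, w_max] the overlap satisfies O(v, c) ≤ ⌊(2(‖c‖ + ‖v‖) − (w_max+1))/4⌋ (equivalently, O(v,c) ≤ ⌊(‖c‖ + ‖v‖ − (w_max+1)/2)/2⌋ with real division). Then for every codeword c' ∈ C it holds that d_H(v, c') ≥ ‖v‖. -/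
open Finset

/-- Guaranteed minimum Hamming distance from all codewords
(Theorem 1 of the paper). -/
theorem tail_sequence_min_distance {n : ℕ}
    (C : Submodule (ZMod 2) (Fin n → ZMod 2))
    (dmin wmax : ℕ) (hle : dmin ≤ wmax)
    (hmin : ∀ c ∈ C, c ≠ 0 → dmin ≤ hammingNorm c)
    (v : Fin n → ZMod 2)
    (hv : hammingNorm v = (wmax + 1) / 2)
    (hover : ∀ c ∈ C, dmin ≤ hammingNorm c → hammingNorm c ≤ wmax →
      (univ.filter (fun i => v i ≠ 0 ∧ c i ≠ 0)).card ≤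
        (2 * (hammingNorm c + hammingNorm v) - (wmax + 1)) / 4) :
    ∀ c' ∈ C, hammingNorm v ≤ hammingDist v c' := by
  intro c' hc'
  set O := (univ.filter (fun i => v i ≠ 0 ∧ c' i ≠ 0)).card with hO
  have hpt : ∀ a b : ZMod 2,
      ((if a ≠ b then 1 else 0) + 2 * (if a ≠ 0 ∧ b ≠ 0 then 1 else 0)
        = (if a ≠ 0 then 1 else 0) + (if b ≠ 0 then 1 else 0) :) := by decide
  have key : hammingDist v c' + 2 * O = hammingNorm v + hammingNorm c' := by
    simp only [hammingDist, hammingNorm, hO, card_filter, Finset.mul_sum,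
      ← Finset.sum_add_distrib]
    exact Finset.sum_congr rfl fun i _ => hpt (v i) (c' i)
  have h2O : 2 * O ≤ hammingNorm c' := by
    by_cases hz : c' = 0
    · have : O = 0 := by simp [hO, hz]
      omega
    · have hd := hmin c' hc' hz
      by_cases hw : hammingNorm c' ≤ wmax
      · have := hover c' hc' hd hw
        omega
      · have hOv : O ≤ hammingNorm v := by
          apply card_le_card
          intro i hi
          simp only [mem_filter, mem_univ, true_and] at hi ⊢
          exact hi.1
        omega
  omega
end

section
/- Let C be a binary linear code of length n in which every codeword has even Hamming weight and whose nonzero codewords all have weight at least d_min, and let w_max ≥ d_min be an even integer. Let v be a vector of length n with Hamming weight ‖v‖ = ⌈(w_max+1)/2⌉ = w_max/2 + 1 such that for every codeword c with ‖c‖ ∈ [d_min, w_max] the overlap satisfies O(v, c) ≤ ⌊(2(‖c‖ + ‖v‖) − (w_max+1))/4⌋ (equivalently, O(v,c) ≤ ⌊(‖c‖ + ‖v‖ − (w_max+1)/2)/2⌋ with real division). Then for every codeword c' ∈ C it holds that d_H(v, c') ≥ ‖v‖. -/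
open Finset

lemma dist_overlap {n : ℕ} (u w : Fin n → ZMod 2) :
    hammingDist u w + 2 * (univ.filter (fun i => u i ≠ 0 ∧ w i ≠ 0)).card =
      hammingNorm u + hammingNorm w := by
  simp only [hammingDist, hammingNorm, Finset.card_filter]
  rw [Finset.mul_sum, ← Finset.sum_add_distrib, ← Finset.sum_add_distrib]
  refine Finset.sum_congr rfl fun i _ => ?_
  revert i
  intro i
  rcases (by decide : ∀ a : ZMod 2, a = 0 ∨ a = 1) (u i) with h1 | h1 <;>
  rcases (by decide : ∀ a : ZMod 2, a = 0 ∨ a = 1) (w i) with h2 | h2 <;>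
  simp [h1, h2]

/-- Corollary for codes with all-even weight distribution. -/
theorem tail_sequence_min_distance_even {n : ℕ}
    (C : Submodule (ZMod 2) (Fin n → ZMod 2))
    (heven : ∀ c ∈ C, Even (hammingNorm c))
    (dmin wmax : ℕ) (hle : dmin ≤ wmax) (hwe : Even wmax)
    (hmin : ∀ c ∈ C, c ≠ 0 → dmin ≤ hammingNorm c)
    (v : Fin n → ZMod 2)
    (hv : hammingNorm v = wmax / 2 + 1)
    (hover : ∀ c ∈ C, dmin ≤ hammingNorm c → hammingNorm c ≤ wmax →
      (univ.filter (fun i => v i ≠ 0 ∧ c i ≠ 0)).card ≤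
        (2 * (hammingNorm c + hammingNorm v) - (wmax + 1)) / 4) :
    ∀ c' ∈ C, hammingNorm v ≤ hammingDist v c' := by
  intro c hc
  have key := dist_overlap v c
  set O := (univ.filter (fun i => v i ≠ 0 ∧ c i ≠ 0)).card with hO
  -- suffices: 2 * O ≤ hammingNorm c
  have main : 2 * O ≤ hammingNorm c := by
    by_cases hz : c = 0
    · subst hz
      have : O = 0 := by
        rw [hO]
        simp
      omega
    · have hd := hmin c hc hz
      by_cases hw : hammingNorm c ≤ wmax
      · have h1 := hover c hc hd hw
        obtain ⟨k, hk⟩ := heven c hc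
        obtain ⟨m, hm⟩ := hwe
        omega
      · -- hammingNorm c > wmax, and O ≤ hammingNorm v
        have hOv : O ≤ hammingNorm v := by
          rw [hO, hammingNorm]
          exact Finset.card_le_card (by
            intro i hi
            simp only [Finset.mem_filter] at hi ⊢
            exact ⟨hi.1, hi.2.1⟩)
        obtain ⟨k, hk⟩ := heven c hc
        obtain ⟨m, hm⟩ := hwe
        omega
  omega
end

section
/- Let C be a binary linear code of length n in which every codeword has even Hamming weight, and for v ∈ F_2^n write D(v) = min_{c ∈ C} d_H(v, c). Let T be a natural number, let j : Fin T → Fin n be a sequence of indices, and let s₀, s₁, …, s_T ∈ F_2^n satisfy s_{t+1} = s_t ⊕ e_{j(t)} for all t < T. Suppose that for every t < T the flip increases the distance to all nearest codewords, i.e., min over {c ∈ C : d_H(s_t, c) = D(s_t)} of d_H(s_{t+1}, c) equals D(s_t) + 1. Then D(s_T) ≥ D(s₀) + T. -/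
/-! Every codeword has even weight, so `d_H(v, c) ≡ ‖v‖ (mod 2)` for all `c ∈ C`, and hence
`D(v) ≡ ‖v‖ (mod 2)`. A single flip `v ↦ w` changes the parity of the weight, so `D(w) ≠ D(v)`.
If `D(w) < D(v)`, a codeword `c` nearest to `w` would satisfy `d_H(v, c) ≤ D(w) + 1 ≤ D(v)`, so
`c` is nearest to `v` as well, while `d_H(w, c) = D(w) ≤ D(v)`: this contradicts the assumption
that the flip moves away from every nearest codeword of `v`. Hence `D(w) ≥ D(v) + 1` at every step,
and the bound follows by induction on `T`. -/

open Finset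

section Parity

variable {ι : Type*} [Fintype ι]

theorem hammingNorm_cast_zmod_two (v : ι → ZMod 2) : (hammingNorm v : ZMod 2) = ∑ i, v i := by
  have one_of_ne_zero : ∀ x : ZMod 2, x ≠ 0 → x = 1 := by decide
  rw [hammingNorm, ← sum_filter_ne_zero,
    sum_congr rfl fun i hi => one_of_ne_zero _ (mem_filter.mp hi).2]
  simp

theorem hammingDist_cast_zmod_two (u v : ι → ZMod 2) :
    (hammingDist u v : ZMod 2) = ∑ i, u i + ∑ i, v i := by
  simp [hammingDist_eq_hammingNorm, hammingNorm_cast_zmod_two, sum_add_distrib, CharTwo.neg_eq]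

theorem hammingDist_cast_zmod_two_of_even {c : ι → ZMod 2} (hc : Even (hammingNorm c))
    (v : ι → ZMod 2) : (hammingDist v c : ZMod 2) = ∑ i, v i := by
  rw [hammingDist_cast_zmod_two, ← hammingNorm_cast_zmod_two c,
    (ZMod.natCast_eq_zero_iff_even).mpr hc, add_zero]

theorem hammingDist_add_single_one [DecidableEq ι] (v : ι → ZMod 2) (j : ι) :
    hammingDist v (v + Pi.single j 1) = 1 := by
  rw [hammingDist_eq_hammingNorm, neg_add_cancel_left, ← hammingDist_zero_right]
  simp [hammingDist, Pi.single_apply, filter_eq']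

end Parity

section CodeDist

variable {ι : Type*} [Fintype ι] {β : ι → Type*} [∀ i, DecidableEq (β i)]

noncomputable def codeDist (C : Set (∀ i, β i)) (v : ∀ i, β i) : ℕ :=
  sInf {m | ∃ c ∈ C, hammingDist v c = m}

variable {C : Set (∀ i, β i)}

theorem codeDist_le_hammingDist {c : ∀ i, β i} (hc : c ∈ C) (v : ∀ i, β i) :
    codeDist C v ≤ hammingDist v c :=
  Nat.sInf_le ⟨c, hc, rfl⟩

theorem exists_hammingDist_eq_codeDist (hC : C.Nonempty) (v : ∀ i, β i) :
    ∃ c ∈ C, hammingDist v c = codeDist C v :=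
  Nat.sInf_mem (s := {m | ∃ c ∈ C, hammingDist v c = m}) (hC.image _)

end CodeDist

section EvenCode

variable {ι : Type*} [Fintype ι] {C : Set (ι → ZMod 2)}

theorem codeDist_cast_zmod_two (hC : C.Nonempty) (heven : ∀ c ∈ C, Even (hammingNorm c))
    (v : ι → ZMod 2) : (codeDist C v : ZMod 2) = ∑ i, v i := by
  obtain ⟨c, hc, hvc⟩ := exists_hammingDist_eq_codeDist hC v
  rw [← hvc, hammingDist_cast_zmod_two_of_even (heven c hc)]

theorem codeDist_ne_of_hammingDist_eq_one (hC : C.Nonempty)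
    (heven : ∀ c ∈ C, Even (hammingNorm c)) {v w : ι → ZMod 2} (hvw : hammingDist v w = 1) :
    codeDist C w ≠ codeDist C v := by
  intro h
  have hcast := congrArg (fun m : ℕ => (m : ZMod 2)) hvw
  simp only [hammingDist_cast_zmod_two, ← codeDist_cast_zmod_two hC heven, h, Nat.cast_one,
    CharTwo.add_self_eq_zero] at hcast
  exact zero_ne_one hcast

theorem codeDist_add_one_le_of_hammingDist_eq_one (hC : C.Nonempty)
    (heven : ∀ c ∈ C, Even (hammingNorm c)) {v w : ι → ZMod 2} (hvw : hammingDist v w = 1)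
    (hnearest : ∀ c ∈ C, hammingDist v c = codeDist C v → codeDist C v < hammingDist w c) :
    codeDist C v + 1 ≤ codeDist C w := by
  by_contra! hlt
  have hne := codeDist_ne_of_hammingDist_eq_one hC heven hvw
  obtain ⟨c, hc, hwc⟩ := exists_hammingDist_eq_codeDist hC w
  have hvc : hammingDist v c = codeDist C v := by
    refine le_antisymm ?_ (codeDist_le_hammingDist hc v)
    calc hammingDist v c ≤ hammingDist v w + hammingDist w c := hammingDist_triangle v w c
      _ ≤ codeDist C v := by omega
  have := hnearest c hc hvc
  omega

end EvenCode

theorem Nat.add_le_of_forall_add_one_le {f : ℕ → ℕ} {T : ℕ}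
    (h : ∀ t < T, f t + 1 ≤ f (t + 1)) : f 0 + T ≤ f T := by
  induction T with
  | zero => rfl
  | succ T ih =>
    have := ih fun t ht => h t (by omega)
    have := h T T.lt_succ_self
    omega

/-- Correctness of the stochastic local search: a sequence of
`T` bit flips, each of which increases the distance to all nearest codewords,
increases the minimum distance to the code by at least `T`. -/
theorem local_search_increases_distance {n : ℕ}
    (C : Submodule (ZMod 2) (Fin n → ZMod 2))
    (heven : ∀ c ∈ C, Even (hammingNorm c))
    (D : (Fin n → ZMod 2) → ℕ)
    (hD : ∀ v, D v = sInf {m | ∃ c ∈ C, hammingDist v c = m})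
    (T : ℕ) (j : Fin T → Fin n)
    (s : ℕ → Fin n → ZMod 2)
    (hs : ∀ t : Fin T, s ((t : ℕ) + 1) = s (t : ℕ) + Pi.single (j t) 1)
    (hflip : ∀ t : Fin T,
      sInf {m | ∃ c, (c ∈ C ∧ hammingDist (s (t : ℕ)) c = D (s (t : ℕ))) ∧
          hammingDist (s ((t : ℕ) + 1)) c = m} = D (s (t : ℕ)) + 1) :
    D (s 0) + T ≤ D (s T) := by
  obtain rfl : D = codeDist C := funext hD
  refine Nat.add_le_of_forall_add_one_le (f := fun t => codeDist C (s t)) fun t ht => ?_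
  have hnearest : ∀ c ∈ C, hammingDist (s t) c = codeDist C (s t) →
      codeDist C (s t) < hammingDist (s (t + 1)) c := fun c hc hvc =>
    (hflip ⟨t, ht⟩).symm.trans_le (Nat.sInf_le ⟨c, ⟨hc, hvc⟩, rfl⟩)
  exact codeDist_add_one_le_of_hammingDist_eq_one ⟨0, C.zero_mem⟩ heven
    ((hs ⟨t, ht⟩).symm ▸ hammingDist_add_single_one _ _) hnearest
end
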